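/- Suppose that for some constant c > 0, for every probability vector λ on {1,...,n} there exists σ ∈ Σ with ∑_{i∈σ} λ_i w_i ≥ c, where w_i > 0 are fixed weights and Σ is a finite nonempty family of subsets of {1,...,n}. Then there exists a probability measure ν on Σ such that for every i, ∑_{σ∈Σ, i∈σ} ν(σ) ≥ c / w_i. -/

import Mathlib

/-- The separation/minimax argument underlying Theorem 1.2. -/
theorem separation_minimax (n : ℕ) (Sig : Finset (Finset (Fin n))) (hSig : Sig.Nonempty)
    (w : Fin n → ℝ) (hw : ∀ i, 0 < w i) (c : ℝ) (hc : 0 < c)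
    (h : ∀ lam : Fin n → ℝ, (∀ i, 0 ≤ lam i) → ∑ i, lam i = 1 →
      ∃ σ ∈ Sig, c ≤ ∑ i ∈ σ, lam i * w i) :
    ∃ ν : Finset (Fin n) → ℝ, (∀ σ, 0 ≤ ν σ) ∧ (∑ σ ∈ Sig, ν σ) = 1 ∧
      ∀ i : Fin n, c / w i ≤ ∑ σ ∈ Sig.filter (fun σ => i ∈ σ), ν σ := by
  classical
  set F : Finset (Fin n) → (Fin n → ℝ) := fun σ i => if i ∈ σ then w i else 0 with hF
  have hFinj : Set.InjOn F ↑Sig := by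
    intro σ _ τ _ hστ
    ext i
    have := congrFun hστ i
    by_contra hcontra
    simp only [hF] at this
    rcases Decidable.em (i ∈ σ) with hi | hi <;> rcases Decidable.em (i ∈ τ) with hj | hj <;>
      simp [hi, hj] at this hcontra <;>
      first
      | exact (hw i).ne' this
      | exact (hw i).ne' this.symm
  set s : Set (Fin n → ℝ) := convexHull ℝ ↑(Sig.image F) with hs
  set t : Set (Fin n → ℝ) := Set.pi Set.univ (fun _ => Set.Ici c) with ht
  by_cases hint : (s ∩ t).Nonempty
  · -- extract the measure
    obtain ⟨y, hys, hyt⟩ := hint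
    rw [hs, Finset.convexHull_eq] at hys
    obtain ⟨W, hW0, hW1, hWc⟩ := hys
    refine ⟨fun σ => if σ ∈ Sig then W (F σ) else 0, ?_, ?_, ?_⟩
    · intro σ
      by_cases hσ : σ ∈ Sig
      · simp only [hσ, if_true]
        exact hW0 _ (Finset.mem_image_of_mem F hσ)
      · simp [hσ]
    · rw [Finset.sum_congr rfl (fun σ hσ => if_pos hσ)]
      rw [← Finset.sum_image (fun a ha b hb => hFinj ha hb)]
      exact hW1
    · intro i
      have hy : (Sig.image F).centerMass W id = y := hWc
      rw [Finset.centerMass_eq_of_sum_1 _ _ hW1] at hy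
      rw [Finset.sum_image (fun a ha b hb => hFinj ha hb)] at hy
      have hyi : y i = (∑ σ ∈ Sig.filter (fun σ => i ∈ σ), W (F σ)) * w i := by
        rw [← hy]
        simp only [Finset.sum_apply, Pi.smul_apply, id_eq, smul_eq_mul, hF]
        rw [Finset.sum_mul, Finset.sum_filter]
        exact Finset.sum_congr rfl (fun σ _ => by by_cases hi : i ∈ σ <;> simp [hi])
      have hci : c ≤ y i := hyt i (Set.mem_univ i)
      rw [hyi] at hci
      rw [div_le_iff₀ (hw i)]
      calc c ≤ (∑ σ ∈ Sig.filter (fun σ => i ∈ σ), W (F σ)) * w i := hci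
        _ = (∑ σ ∈ Sig.filter (fun σ => i ∈ σ), if σ ∈ Sig then W (F σ) else 0) * w i := by
            congr 1
            exact Finset.sum_congr rfl (fun σ hσ => (if_pos (Finset.mem_filter.mp hσ).1).symm)
  · -- separation argument, derive a contradiction
    exfalso
    have hdisj : Disjoint s t :=
      Set.disjoint_iff_inter_eq_empty.mpr (Set.not_nonempty_iff_eq_empty.mp hint)
    have hscvx : Convex ℝ s := convex_convexHull ℝ _
    have hscpt : IsCompact s := (Sig.image F).finite_toSet.isCompact_convexHull ℝ
    have htcvx : Convex ℝ t := convex_pi (fun i _ => convex_Ici c)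
    have htcl : IsClosed t := isClosed_set_pi (fun i _ => isClosed_Ici)
    obtain ⟨φ, u, v, hsu, huv, hvt⟩ :=
      geometric_hahn_banach_compact_closed hscvx hscpt htcvx htcl hdisj
    set a : Fin n → ℝ := fun i => φ (Pi.single i 1) with ha
    have hφ : ∀ x : Fin n → ℝ, φ x = ∑ i, x i * a i := by
      intro x
      conv_lhs => rw [← Finset.univ_sum_single x]
      rw [map_sum]
      refine Finset.sum_congr rfl (fun i _ => ?_)
      have : (Pi.single i (x i) : Fin n → ℝ) = x i • (Pi.single i 1 : Fin n → ℝ) := by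
        rw [← Pi.single_smul, smul_eq_mul, mul_one]
      rw [this, map_smul, smul_eq_mul, ha]
    -- each a i is nonnegative
    have ha0 : ∀ i, 0 ≤ a i := by
      intro i
      by_contra hai
      push_neg at hai
      set M : ℝ := max 0 ((φ (fun _ => c) - v) / (-a i)) + 1 with hM
      have hM0 : 0 ≤ M := by positivity
      have hq : (((fun _ => c) : Fin n → ℝ) + M • (Pi.single i 1 : Fin n → ℝ)) ∈ t := by
        intro j _
        simp only [Pi.add_apply, Pi.smul_apply, smul_eq_mul, Set.mem_Ici]
        rcases Decidable.em (j = i) with hj | hj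
        · subst hj; simp; positivity
        · simp [Pi.single_eq_of_ne hj]
      have hv := hvt _ hq
      rw [map_add, map_smul, smul_eq_mul] at hv
      have hφ1 : φ (Pi.single i (1:ℝ)) = a i := rfl
      rw [hφ1] at hv
      have hMgt : (φ (fun _ => c) - v) / (-a i) < M := by
        have h' := le_max_right 0 ((φ (fun _ => c) - v) / (-a i))
        rw [hM]
        linarith
      have : φ (fun _ => c) - v < M * (-a i) := by
        rwa [div_lt_iff₀ (by linarith : (0:ℝ) < -a i)] at hMgt
      linarith
    have hc1t : (fun _ => c) ∈ t := fun j _ => le_refl c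
    have hvS : v < c * ∑ i, a i := by
      have := hvt _ hc1t
      rw [hφ] at this
      rw [Finset.mul_sum]
      simpa [mul_comm] using this
    have hφF : ∀ σ ∈ Sig, φ (F σ) = ∑ i ∈ σ, a i * w i := by
      intro σ _
      rw [hφ]
      rw [← Finset.sum_filter_add_sum_filter_not Finset.univ (fun i => i ∈ σ)]
      have h2 : ∑ i ∈ Finset.univ.filter (fun i => ¬ i ∈ σ), F σ i * a i = 0 := by
        refine Finset.sum_eq_zero (fun i hi => ?_)
        simp only [Finset.mem_filter] at hi
        simp [hF, hi.2]
      rw [h2, add_zero]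
      rw [Finset.filter_mem_eq_inter, Finset.univ_inter]
      exact Finset.sum_congr rfl (fun i hi => by simp [hF, hi, mul_comm])
    have hS0 : 0 < ∑ i, a i := by
      obtain ⟨σ₀, hσ₀⟩ := hSig
      have hF0 : F σ₀ ∈ s := subset_convexHull ℝ _ (by
        simp only [Finset.coe_image, Set.mem_image]
        exact ⟨σ₀, hσ₀, rfl⟩)
      have h1 : φ (F σ₀) < u := hsu _ hF0
      have h2 : 0 ≤ φ (F σ₀) := by
        rw [hφF σ₀ hσ₀]
        exact Finset.sum_nonneg (fun i _ => mul_nonneg (ha0 i) (hw i).le)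
      nlinarith
    set S : ℝ := ∑ i, a i with hSdef
    obtain ⟨σ, hσ, hcσ⟩ := h (fun i => a i / S) (fun i => div_nonneg (ha0 i) hS0.le)
      (by rw [← Finset.sum_div, ← hSdef, div_self hS0.ne'])
    have h1 : φ (F σ) < u := hsu _ (subset_convexHull ℝ _ (by
      simp only [Finset.coe_image, Set.mem_image]
      exact ⟨σ, hσ, rfl⟩))
    have h2 : ∑ i ∈ σ, a i / S * w i = φ (F σ) / S := by
      rw [hφF σ hσ, Finset.sum_div]
      exact Finset.sum_congr rfl (fun i _ => by ring)
    rw [h2] at hcσ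
    have : φ (F σ) < c * S := by linarith
    have : φ (F σ) / S < c := by
      rw [div_lt_iff₀ hS0]; linarith [this]
    linarith
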